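/- For 0 < λ < 1: (a) liminf over N of ∑_{n=1}^N (∏_{i=1}^{n-1}(1-i/N))·λ^{n-1}/n is at least ∑_{n=1}^k λ^{n-1}/n for every k; (b) limsup over N of the same sum is at most ∑_{n=1}^k λ^{n-1}/n + λ^k/(1-λ) for every k. -/

import Mathlib

/-!
Each weight `∏_{i<n} (1 - i/N)` lies in `[0, 1]` and tends to `1` as `N → ∞` with `n` fixed.
Since all terms are nonnegative, the sum dominates its first `k` terms, which converge to
`∑_{n ≤ k} λ^(n-1)/n`; and it is dominated by the unweighted sum, whose part beyond `k` is at
most the geometric tail `λ^k / (1 - λ)`.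
-/

open Finset Filter Topology

section WeightedPartialSums

variable {b : ℕ → ℝ} {c : ℕ → ℕ → ℝ}

theorem sum_Icc_mul_le_sum_Icc (hb : ∀ n, 0 ≤ b n) (hc : ∀ N, ∀ n ∈ Icc 1 N, c N n ≤ 1)
    (N : ℕ) : ∑ n ∈ Icc 1 N, c N n * b n ≤ ∑ n ∈ Icc 1 N, b n :=
  sum_le_sum fun n hn => mul_le_of_le_one_left (hb n) (hc N n hn)

theorem le_liminf_sum_Icc_mul (hb : ∀ n, 0 ≤ b n)
    (hc : ∀ N, ∀ n ∈ Icc 1 N, c N n ∈ Set.Icc 0 1)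
    (hc_lim : ∀ n, Tendsto (fun N => c N n) atTop (𝓝 1)) {B : ℝ}
    (hB : ∀ N, ∑ n ∈ Icc 1 N, b n ≤ B) (k : ℕ) :
    ∑ n ∈ Icc 1 k, b n ≤ liminf (fun N => ∑ n ∈ Icc 1 N, c N n * b n) atTop := by
  have hlim : Tendsto (fun N => ∑ n ∈ Icc 1 k, c N n * b n) atTop
      (𝓝 (∑ n ∈ Icc 1 k, b n)) := by
    simpa using tendsto_finsetSum _ fun n _ => (hc_lim n).mul_const (b n)
  have hmono :
      ∀ᶠ N in atTop, ∑ n ∈ Icc 1 k, c N n * b n ≤ ∑ n ∈ Icc 1 N, c N n * b n :=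
    eventually_atTop.2 ⟨k, fun N hN => sum_le_sum_of_subset_of_nonneg
      (Icc_subset_Icc_right hN) fun n hn _ => mul_nonneg (hc N n hn).1 (hb n)⟩
  rw [← hlim.liminf_eq]
  exact liminf_le_liminf hmono hlim.isBoundedUnder_ge
    (isCoboundedUnder_ge_of_le atTop fun N =>
      (sum_Icc_mul_le_sum_Icc hb (fun N n hn => (hc N n hn).2) N).trans (hB N))

theorem limsup_sum_Icc_mul_le (hb : ∀ n, 0 ≤ b n)
    (hc : ∀ N, ∀ n ∈ Icc 1 N, c N n ∈ Set.Icc 0 1) {k : ℕ} {t : ℝ}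
    (htail : ∀ N, ∑ n ∈ Ioc k N, b n ≤ t) :
    limsup (fun N => ∑ n ∈ Icc 1 N, c N n * b n) atTop ≤ ∑ n ∈ Icc 1 k, b n + t := by
  have hnonneg (N : ℕ) : 0 ≤ ∑ n ∈ Icc 1 N, c N n * b n :=
    sum_nonneg fun n hn => mul_nonneg (hc N n hn).1 (hb n)
  refine limsup_le_of_le (isCoboundedUnder_le_of_le atTop hnonneg)
    (eventually_atTop.2 ⟨k, fun N hN => ?_⟩)
  calc ∑ n ∈ Icc 1 N, c N n * b n ≤ ∑ n ∈ Icc 1 N, b n :=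
        sum_Icc_mul_le_sum_Icc hb (fun N n hn => (hc N n hn).2) N
    _ = ∑ n ∈ Icc 1 k, b n + ∑ n ∈ Ioc k N, b n := by
      rw [← zero_add 1, Icc_add_one_left_eq_Ioc, Icc_add_one_left_eq_Ioc,
        sum_Ioc_consecutive _ k.zero_le hN]
    _ ≤ ∑ n ∈ Icc 1 k, b n + t := by gcongr; exact htail N

end WeightedPartialSums

theorem prod_one_sub_div_mem_Icc {m N : ℕ} (h : m ≤ N) :
    ∏ i ∈ Icc 1 m, (1 - (i : ℝ) / N) ∈ Set.Icc 0 1 := by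
  have hfac : ∀ i ∈ Icc 1 m, (1 - (i : ℝ) / N) ∈ Set.Icc 0 1 := fun i hi => by
    have hiN : (i : ℝ) ≤ N := by exact_mod_cast (mem_Icc.1 hi).2.trans h
    constructor
    · exact sub_nonneg.2 (div_le_one_of_le₀ hiN N.cast_nonneg)
    · exact sub_le_self _ (by positivity)
  exact ⟨prod_nonneg fun i hi => (hfac i hi).1,
    prod_le_one (fun i hi => (hfac i hi).1) fun i hi => (hfac i hi).2⟩

theorem tendsto_prod_one_sub_div (m : ℕ) :
    Tendsto (fun N : ℕ => ∏ i ∈ Icc 1 m, (1 - (i : ℝ) / N)) atTop (𝓝 1) := by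
  have hdiv (i : ℕ) : Tendsto (fun N : ℕ => (i : ℝ) / N) atTop (𝓝 0) :=
    tendsto_const_nhds.div_atTop tendsto_natCast_atTop_atTop
  simpa using tendsto_finsetProd (Icc 1 m) fun i _ => (hdiv i).const_sub 1

theorem sum_Ioc_pow_sub_one_div_le {l : ℝ} (hl0 : 0 ≤ l) (hl1 : l < 1) (k N : ℕ) :
    ∑ n ∈ Ioc k N, l ^ (n - 1) / n ≤ l ^ k / (1 - l) :=
  calc ∑ n ∈ Ioc k N, l ^ (n - 1) / n ≤ ∑ n ∈ Ioc k N, l ^ (n - 1) :=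
        sum_le_sum fun n hn => div_le_self (by positivity)
          (by exact_mod_cast (Nat.zero_lt_of_lt (mem_Ioc.1 hn).1 : 1 ≤ n))
    _ = ∑ m ∈ Ico k N, l ^ m := by
        rw [← Ico_add_one_add_one_eq_Ioc, ← sum_Ico_add']
        simp
    _ ≤ l ^ k / (1 - l) := geom_sum_Ico_le_of_lt_one hl0 hl1

theorem stmt_15 (l : ℝ) (hl : 0 < l) (hl1 : l < 1) (k : ℕ) :
    ((∑ n ∈ Finset.Icc 1 k, l ^ (n - 1) / n) ≤
      Filter.liminf
        (fun N : ℕ => ∑ n ∈ Finset.Icc 1 N,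
          (∏ i ∈ Finset.Icc 1 (n - 1), (1 - (i : ℝ) / N)) * l ^ (n - 1) / n)
        Filter.atTop) ∧
    (Filter.limsup
        (fun N : ℕ => ∑ n ∈ Finset.Icc 1 N,
          (∏ i ∈ Finset.Icc 1 (n - 1), (1 - (i : ℝ) / N)) * l ^ (n - 1) / n)
        Filter.atTop ≤
      (∑ n ∈ Finset.Icc 1 k, l ^ (n - 1) / n) + l ^ k / (1 - l)) := by
  have hb : ∀ n : ℕ, 0 ≤ l ^ (n - 1) / n := fun n => by positivity
  have hc (N : ℕ) :
      ∀ n ∈ Icc 1 N, ∏ i ∈ Icc 1 (n - 1), (1 - (i : ℝ) / N) ∈ Set.Icc 0 1 := fun n hn =>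
    prod_one_sub_div_mem_Icc ((Nat.sub_le n 1).trans (mem_Icc.1 hn).2)
  simp_rw [mul_div_assoc]
  have hB : ∀ N : ℕ, ∑ n ∈ Icc 1 N, l ^ (n - 1) / n ≤ 1 / (1 - l) := fun N => by
    simpa [← Icc_add_one_left_eq_Ioc] using sum_Ioc_pow_sub_one_div_le hl.le hl1 0 N
  exact ⟨le_liminf_sum_Icc_mul hb hc (fun n => tendsto_prod_one_sub_div (n - 1)) hB k,
    limsup_sum_Icc_mul_le hb hc (sum_Ioc_pow_sub_one_div_le hl.le hl1 k)⟩
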